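/- (Kim–Lee) Let a ∈ (0,2) with a ≠ 1, let C, λ₊, λ₋, μ₊, μ₋ > 0 and T > 0, and assume λ₊ < 2μ₊ and λ₋ < 2μ₋. Define r : ℝ → ℝ by r(x) = exp(−(λ₊−μ₊)x) for x > 0 and r(x) = exp(−(λ₋−μ₋)|x|) for x < 0, and let ℓ̃(x) = C·e^{−μ₊x}·x^{−a−1} for x > 0, ℓ̃(x) = C·e^{−μ₋|x|}·|x|^{−a−1} for x < 0, ℓ̃(0) = 0. Then T·∫_ℝ (r(x)·log r(x) − r(x) + 1)·ℓ̃(x) dx = T·C·Γ(−a)·( ((a−1)·λ₊^{a} − a·μ₊·λ₊^{a−1} + μ₊^{a}) + ((a−1)·λ₋^{a} − a·μ₋·λ₋^{a−1} + μ₋^{a}) ). -/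

import Mathlib

open MeasureTheory Real Set

/-- The CTS (classical tempered stable) Lévy density with tail index `a`,
scale `C`, and decay rates `θ₊`, `θ₋`. -/
noncomputable def ctsDensity (a C tp tm : ℝ) (x : ℝ) : ℝ :=
  if 0 < x then C * exp (-(tp * x)) * x ^ (-a - 1)
  else if x < 0 then C * exp (-(tm * |x|)) * |x| ^ (-a - 1)
  else 0

/-!
On a half-line, with `r = e^{-(λ - μ) x}`, the integrand `(r log r - r + 1) e^{-μ x}` is
`h x = e^{-μ x} - e^{-λ x} - (λ - μ) x e^{-λ x}`, which vanishes to second order at `0` and decays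
exponentially. Integrating by parts twice against the weight `x ^ (-a - 1)` (the boundary terms
vanish because `h = O(x²)` and `h' = O(x)` at `0`) gives
`a (a - 1) ∫ x ^ (-a - 1) h = ∫ x ^ (1 - a) h''`, uniformly in `a ∈ (0, 2) \ {1}`. The right side
is a sum of Gamma integrals, and `Γ(2 - a) = a (a - 1) Γ(-a)`, `Γ(3 - a) = (2 - a) Γ(2 - a)` turn
it into the stated closed form. The negative half-line is the same computation after `x ↦ -x`.
-/

open Filter Topology

theorem integral_eq_integral_Ioi_add_integral_Ioi_comp_neg {f : ℝ → ℝ}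
    (hpos : IntegrableOn f (Ioi 0)) (hneg : IntegrableOn (fun x => f (-x)) (Ioi 0)) :
    ∫ x, f x = (∫ x in Ioi 0, f x) + ∫ x in Ioi 0, f (-x) := by
  have hIic : IntegrableOn f (Iic 0) := by
    have h : IntegrableOn (fun x => f (-x)) (Ici (-0)) := by
      rw [neg_zero]; exact Iff.mpr integrableOn_Ici_iff_integrableOn_Ioi hneg
    simpa only [neg_neg] using h.comp_neg_Iic
  rw [← intervalIntegral.integral_Iic_add_Ioi hIic hpos, integral_comp_neg_Ioi, neg_zero]
  exact add_comm _ _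

theorem integrableOn_rpow_mul_exp_neg_mul {s b : ℝ} (hs : -1 < s) (hb : 0 < b) :
    IntegrableOn (fun x : ℝ => x ^ s * exp (-(b * x))) (Ioi 0) := by
  simpa only [rpow_one, neg_mul] using integrableOn_rpow_mul_exp_neg_mul_rpow hs one_pos hb

theorem integral_Ioi_rpow_mul_exp_neg_mul {s b : ℝ} (hs : -1 < s) (hb : 0 < b) :
    ∫ x in Ioi 0, x ^ s * exp (-(b * x)) = Gamma (s + 1) / b ^ (s + 1) := by
  have := integral_rpow_mul_exp_neg_mul_Ioi (a := s + 1) (by linarith) hb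
  rw [add_sub_cancel_right, one_div, inv_rpow hb.le] at this
  rw [this, inv_mul_eq_div]

theorem integrableOn_Ioc_of_abs_le_rpow {g : ℝ → ℝ} {K q : ℝ} (hq : -1 < q)
    (hg : ContinuousOn g (Ioc 0 1)) (hb : ∀ x ∈ Ioc (0 : ℝ) 1, |g x| ≤ K * x ^ q) :
    IntegrableOn g (Ioc 0 1) := by
  refine Integrable.mono' ((intervalIntegral.intervalIntegrable_rpow' hq).1.const_mul K)
    (hg.aestronglyMeasurable measurableSet_Ioc) ?_
  exact (ae_restrict_iff' measurableSet_Ioc).mpr (Eventually.of_forall hb)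

theorem tendsto_nhdsGT_zero_of_abs_le_rpow {g : ℝ → ℝ} {K q : ℝ} (hq : 0 < q)
    (hb : ∀ x ∈ Ioc (0 : ℝ) 1, |g x| ≤ K * x ^ q) : Tendsto g (𝓝[>] 0) (𝓝 0) := by
  have hpow : Tendsto (fun x : ℝ => K * x ^ q) (𝓝[>] 0) (𝓝 0) := by
    simpa [zero_rpow hq.ne'] using
      ((continuousAt_rpow_const 0 q (Or.inr hq.le)).tendsto.const_mul K).mono_left
        nhdsWithin_le_nhds
  exact squeeze_zero_norm' (Filter.mem_of_superset (Ioc_mem_nhdsGT zero_lt_one) hb) hpow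

theorem exists_abs_le_mul_sq_of_hasDerivAt {f f' f'' : ℝ → ℝ}
    (hf : ∀ x, HasDerivAt f (f' x) x) (hf' : ∀ x, HasDerivAt f' (f'' x) x)
    (hf'' : Continuous f'') (h0 : f 0 = 0) (h0' : f' 0 = 0) :
    ∃ K, ∀ x ∈ Icc (0 : ℝ) 1, |f' x| ≤ K * x ∧ |f x| ≤ K * x ^ 2 := by
  obtain ⟨K, hK⟩ := (isCompact_Icc (a := (0 : ℝ)) (b := 1)).exists_bound_of_continuousOn
    hf''.continuousOn
  have hK0 : 0 ≤ K := (norm_nonneg _).trans (hK 0 (left_mem_Icc.2 zero_le_one))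
  have hf'_le : ∀ x ∈ Icc (0 : ℝ) 1, |f' x| ≤ K * x := fun x hx => by
    simpa [h0'] using norm_image_sub_le_of_norm_deriv_le_segment'
      (fun t _ => (hf' t).hasDerivWithinAt) (fun t ht => hK t ⟨ht.1, ht.2.le.trans hx.2⟩)
      x (right_mem_Icc.2 hx.1)
  refine ⟨K, fun x hx => ⟨hf'_le x hx, ?_⟩⟩
  have := norm_image_sub_le_of_norm_deriv_le_segment' (C := K * x)
    (fun t _ => (hf t).hasDerivWithinAt)
    (fun t ht => (hf'_le t ⟨ht.1, ht.2.le.trans hx.2⟩).trans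
      (mul_le_mul_of_nonneg_left ht.2.le hK0)) x (right_mem_Icc.2 hx.1)
  simpa [h0, sq, mul_assoc] using this

theorem integral_Ioi_rpow_mul_deriv {f f' : ℝ → ℝ} {s : ℝ}
    (hf : ∀ x ∈ Ioi (0 : ℝ), HasDerivAt f (f' x) x)
    (hint : IntegrableOn (fun x => x ^ (s - 1) * f x) (Ioi 0))
    (hint' : IntegrableOn (fun x => x ^ s * f' x) (Ioi 0))
    (hzero : Tendsto (fun x => x ^ s * f x) (𝓝[>] 0) (𝓝 0))
    (hinfty : Tendsto (fun x => x ^ s * f x) atTop (𝓝 0)) :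
    ∫ x in Ioi 0, x ^ s * f' x = -s * ∫ x in Ioi 0, x ^ (s - 1) * f x := by
  have hpow : ∀ x ∈ Ioi (0 : ℝ), HasDerivAt (fun x => x ^ s) (s * x ^ (s - 1)) x :=
    fun x hx => hasDerivAt_rpow_const (Or.inl hx.ne')
  have hint₁ : IntegrableOn (fun x => s * x ^ (s - 1) * f x) (Ioi 0) := by
    simp only [mul_assoc]
    exact hint.const_mul s
  rw [integral_Ioi_mul_deriv_eq_deriv_mul hpow hf hint' hint₁ hzero hinfty]
  simp only [mul_assoc, integral_const_mul]
  ring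

theorem abs_rpow_mul_le_of_abs_le_pow {y s K x : ℝ} {n : ℕ} (hx : 0 < x)
    (hy : |y| ≤ K * x ^ n) : |x ^ s * y| ≤ K * x ^ (s + n) := by
  rw [abs_mul, abs_of_pos (rpow_pos_of_pos hx s), rpow_add_natCast hx.ne']
  nlinarith [rpow_pos_of_pos hx s]

/-- Closed under differentiation; the one-sided relative-entropy integrand is
`expLinComb l m (-1) 1 (m - l)`. -/
noncomputable def expLinComb (l m α β γ x : ℝ) : ℝ :=
  α * exp (-(l * x)) + β * exp (-(m * x)) + γ * (x * exp (-(l * x)))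

theorem continuous_expLinComb (l m α β γ : ℝ) : Continuous (expLinComb l m α β γ) := by
  unfold expLinComb; fun_prop

theorem hasDerivAt_expLinComb (l m α β γ x : ℝ) :
    HasDerivAt (expLinComb l m α β γ)
      (expLinComb l m (γ - l * α) (-(m * β)) (-(l * γ)) x) x := by
  have hexp : ∀ b, HasDerivAt (fun y => exp (-(b * y))) (-b * exp (-(b * x))) x := fun b => by
    simpa [mul_comm] using ((hasDerivAt_id' x).const_mul b).neg.exp
  have := (((hexp l).const_mul α).add ((hexp m).const_mul β)).add
    (((hasDerivAt_id' x).mul (hexp l)).const_mul γ)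
  exact this.congr_deriv (by simp only [expLinComb]; ring)

theorem tendsto_rpow_mul_expLinComb_atTop {l m : ℝ} (hl : 0 < l) (hm : 0 < m) (α β γ s : ℝ) :
    Tendsto (fun x => x ^ s * expLinComb l m α β γ x) atTop (𝓝 0) := by
  have hexp : ∀ t b : ℝ, 0 < b → Tendsto (fun x : ℝ => x ^ t * exp (-(b * x))) atTop (𝓝 0) :=
    fun t b hb => by simpa only [neg_mul] using tendsto_rpow_mul_exp_neg_mul_atTop_nhds_zero t b hb
  have := (((hexp s l hl).const_mul α).add ((hexp s m hm).const_mul β)).add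
    ((hexp (s + 1) l hl).const_mul γ)
  simp only [mul_zero, add_zero] at this
  refine this.congr' ((eventually_gt_atTop 0).mono fun x hx => ?_)
  simp only [expLinComb, rpow_add_one hx.ne']
  ring

theorem integrableOn_rpow_mul_expLinComb {l m : ℝ} (hl : 0 < l) (hm : 0 < m) (α β γ : ℝ) {s : ℝ}
    (hs : -1 < s) : IntegrableOn (fun x => x ^ s * expLinComb l m α β γ x) (Ioi 0) := by
  have := (((integrableOn_rpow_mul_exp_neg_mul hs hl).const_mul α).add
    ((integrableOn_rpow_mul_exp_neg_mul hs hm).const_mul β)).add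
    ((integrableOn_rpow_mul_exp_neg_mul (s := s + 1) (by linarith) hl).const_mul γ)
  refine IntegrableOn.congr_fun this (fun x hx => ?_) measurableSet_Ioi
  simp only [Pi.add_apply, expLinComb, rpow_add_one (ne_of_gt hx)]
  ring

theorem integral_rpow_mul_expLinComb {l m : ℝ} (hl : 0 < l) (hm : 0 < m) (α β γ : ℝ) {s : ℝ}
    (hs : -1 < s) :
    ∫ x in Ioi 0, x ^ s * expLinComb l m α β γ x
      = Gamma (s + 1) * (α / l ^ (s + 1) + β / m ^ (s + 1)) + γ * Gamma (s + 2) / l ^ (s + 2) := by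
  have i₁ := integrableOn_rpow_mul_exp_neg_mul hs hl
  have i₂ := integrableOn_rpow_mul_exp_neg_mul hs hm
  have i₃ := integrableOn_rpow_mul_exp_neg_mul (s := s + 1) (by linarith) hl
  have hsplit : ∀ x ∈ Ioi (0 : ℝ), x ^ s * expLinComb l m α β γ x
      = α * (x ^ s * exp (-(l * x))) + β * (x ^ s * exp (-(m * x)))
        + γ * (x ^ (s + 1) * exp (-(l * x))) := fun x hx => by
    rw [expLinComb, rpow_add_one (ne_of_gt hx)]
    ring
  rw [setIntegral_congr_fun measurableSet_Ioi hsplit, integral_add, integral_add,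
    integral_const_mul, integral_const_mul, integral_const_mul,
    integral_Ioi_rpow_mul_exp_neg_mul hs hl,
    integral_Ioi_rpow_mul_exp_neg_mul hs hm,
    integral_Ioi_rpow_mul_exp_neg_mul (s := s + 1) (by linarith) hl, add_assoc s 1 1,
    one_add_one_eq_two]
  · ring
  exacts [i₁.const_mul α, i₂.const_mul β, (i₁.const_mul α).add (i₂.const_mul β), i₃.const_mul γ]

theorem integrableOn_rpow_mul_expLinComb_of_abs_le {l m α β γ s K : ℝ} {n : ℕ}
    (hl : 0 < l) (hm : 0 < m) (hsn : -1 < s + n)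
    (hb : ∀ x ∈ Icc (0 : ℝ) 1, |expLinComb l m α β γ x| ≤ K * x ^ n) :
    IntegrableOn (fun x => x ^ s * expLinComb l m α β γ x) (Ioi 0) := by
  have hcont : ContinuousOn (fun x => x ^ s * expLinComb l m α β γ x) (Ioi 0) :=
    fun x hx => ((continuousAt_rpow_const x s (Or.inl (ne_of_gt hx))).mul
      (continuous_expLinComb l m α β γ).continuousAt).continuousWithinAt
  rw [← Ioc_union_Ioi_eq_Ioi zero_le_one]
  refine IntegrableOn.union (integrableOn_Ioc_of_abs_le_rpow hsn
    (hcont.mono Ioc_subset_Ioi_self) fun x hx =>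
      abs_rpow_mul_le_of_abs_le_pow hx.1 (hb x (Ioc_subset_Icc_self hx))) ?_
  have hmax := (integrableOn_rpow_mul_expLinComb hl hm α β γ
    (s := max s 0) (by linarith [le_max_right s 0])).mono_set (Ioi_subset_Ioi zero_le_one)
  refine Integrable.mono' hmax.norm
    ((hcont.mono (Ioi_subset_Ioi zero_le_one)).aestronglyMeasurable measurableSet_Ioi)
    ((ae_restrict_iff' measurableSet_Ioi).mpr (Eventually.of_forall fun x hx => ?_))
  have hx : (1 : ℝ) < x := hx
  rw [norm_mul, norm_mul]
  gcongr
  simp only [norm_eq_abs, abs_of_pos (rpow_pos_of_pos (zero_lt_one.trans hx) _)]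
  exact rpow_le_rpow_of_exponent_le hx.le (le_max_left s 0)

theorem mul_log_sub_add_one_mul_exp_eq_expLinComb (l m x : ℝ) :
    (exp (-((l - m) * x)) * log (exp (-((l - m) * x))) - exp (-((l - m) * x)) + 1)
      * exp (-(m * x)) = expLinComb l m (-1) 1 (m - l) x := by
  have hexp : exp (-((l - m) * x)) * exp (-(m * x)) = exp (-(l * x)) := by
    rw [← exp_add]; ring_nf
  rw [log_exp, expLinComb]
  linear_combination -(1 + (l - m) * x) * hexp

theorem Gamma_combination_eq_mul_Gamma_neg {a l m : ℝ} (ha₀ : a ≠ 0) (ha₁ : a ≠ 1) (ha₂ : a < 2)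
    (hl : 0 < l) (hm : 0 < m) :
    Gamma (1 - a + 1) * ((l ^ 2 - 2 * l * m) / l ^ (1 - a + 1) + m ^ 2 / m ^ (1 - a + 1))
        + l ^ 2 * (m - l) * Gamma (1 - a + 2) / l ^ (1 - a + 2)
      = a * (a - 1) * (Gamma (-a) * ((a - 1) * l ^ a - a * m * l ^ (a - 1) + m ^ a)) := by
  have e₂ : 1 - a + 1 = -a + 1 + 1 := by ring
  have e₃ : 1 - a + 2 = -a + 1 + 1 + 1 := by ring
  rw [e₂, e₃, Gamma_add_one (s := -a + 1 + 1) (by contrapose! ha₂; linarith),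
    Gamma_add_one (s := -a + 1) (by contrapose! ha₁; linarith),
    Gamma_add_one (s := -a) (neg_ne_zero.2 ha₀)]
  simp only [rpow_add_one hl.ne', rpow_add_one hm.ne', rpow_sub_one hl.ne', rpow_neg hl.le,
    rpow_neg hm.le]
  have := rpow_pos_of_pos hl a
  have := rpow_pos_of_pos hm a
  field_simp
  ring

theorem integral_rpow_neg_sub_one_mul_expLinComb {a l m : ℝ} (ha₀ : a ≠ 0) (ha₁ : a ≠ 1)
    (ha₂ : a < 2) (hl : 0 < l) (hm : 0 < m) :
    IntegrableOn (fun x => x ^ (-a - 1) * expLinComb l m (-1) 1 (m - l) x) (Ioi 0) ∧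
      ∫ x in Ioi 0, x ^ (-a - 1) * expLinComb l m (-1) 1 (m - l) x
        = Gamma (-a) * ((a - 1) * l ^ a - a * m * l ^ (a - 1) + m ^ a) := by
  set f := expLinComb l m (-1) 1 (m - l)
  set f' := expLinComb l m m (-m) (l * (l - m))
  set f'' := expLinComb l m (l ^ 2 - 2 * l * m) (m ^ 2) (l ^ 2 * (m - l))
  have hf : ∀ x, HasDerivAt f (f' x) x := fun x =>
    (hasDerivAt_expLinComb _ _ _ _ _ x).congr_deriv (by simp only [f', expLinComb]; ring)
  have hf' : ∀ x, HasDerivAt f' (f'' x) x := fun x =>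
    (hasDerivAt_expLinComb _ _ _ _ _ x).congr_deriv (by simp only [f'', expLinComb]; ring)
  obtain ⟨K, hK⟩ := exists_abs_le_mul_sq_of_hasDerivAt hf hf' (continuous_expLinComb _ _ _ _ _)
    (by simp [f, expLinComb]) (by simp [f', expLinComb])
  have hK₁ : ∀ x ∈ Icc (0 : ℝ) 1, |f' x| ≤ K * x ^ 1 := fun x hx => by simpa using (hK x hx).1
  have i₀ : IntegrableOn (fun x => x ^ (-a - 1) * f x) (Ioi 0) :=
    integrableOn_rpow_mul_expLinComb_of_abs_le hl hm (by push_cast; linarith) fun x hx =>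
      (hK x hx).2
  have i₁ : IntegrableOn (fun x => x ^ (-a) * f' x) (Ioi 0) :=
    integrableOn_rpow_mul_expLinComb_of_abs_le hl hm (by push_cast; linarith) hK₁
  have ibp₁ : ∫ x in Ioi 0, x ^ (-a) * f' x = a * ∫ x in Ioi 0, x ^ (-a - 1) * f x := by
    rw [integral_Ioi_rpow_mul_deriv (fun x _ => hf x) i₀ i₁
      (tendsto_nhdsGT_zero_of_abs_le_rpow (by push_cast; linarith) fun x hx =>
        abs_rpow_mul_le_of_abs_le_pow hx.1 (hK x (Ioc_subset_Icc_self hx)).2)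
      (tendsto_rpow_mul_expLinComb_atTop hl hm _ _ _ _), neg_neg]
  have ibp₂ : ∫ x in Ioi 0, x ^ (1 - a) * f'' x = (a - 1) * ∫ x in Ioi 0, x ^ (-a) * f' x := by
    have hs : (1 : ℝ) - a - 1 = -a := by ring
    rw [integral_Ioi_rpow_mul_deriv (fun x _ => hf' x) (by rw [hs]; exact i₁)
      (integrableOn_rpow_mul_expLinComb hl hm _ _ _ (by linarith))
      (tendsto_nhdsGT_zero_of_abs_le_rpow (by push_cast; linarith) fun x hx =>
        abs_rpow_mul_le_of_abs_le_pow hx.1 (hK₁ x (Ioc_subset_Icc_self hx)))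
      (tendsto_rpow_mul_expLinComb_atTop hl hm _ _ _ _), hs, neg_sub]
  refine ⟨i₀, mul_left_cancel₀ (mul_ne_zero ha₀ (sub_ne_zero.2 ha₁)) ?_⟩
  calc a * (a - 1) * ∫ x in Ioi 0, x ^ (-a - 1) * f x
      = ∫ x in Ioi 0, x ^ (1 - a) * f'' x := by rw [ibp₂, ibp₁]; ring
    _ = _ := integral_rpow_mul_expLinComb hl hm _ _ _ (by linarith)
    _ = _ := Gamma_combination_eq_mul_Gamma_neg ha₀ ha₁ ha₂ hl hm

theorem cts_kl_divergence_kim_lee_general (a C lp lm mp mm T : ℝ)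
    (ha₀ : 0 < a) (ha₂ : a < 2) (ha₁ : a ≠ 1)
    (hlp : 0 < lp) (hlm : 0 < lm) (hmp : 0 < mp) (hmm : 0 < mm)
    (r : ℝ → ℝ)
    (hrp : ∀ x : ℝ, 0 < x → r x = exp (-((lp - mp) * x)))
    (hrm : ∀ x : ℝ, x < 0 → r x = exp (-((lm - mm) * |x|))) :
    T * ∫ x : ℝ, (r x * Real.log (r x) - r x + 1) * ctsDensity a C mp mm x
      = T * C * Gamma (-a) *
        (((a - 1) * lp ^ a - a * mp * lp ^ (a - 1) + mp ^ a)
          + ((a - 1) * lm ^ a - a * mm * lm ^ (a - 1) + mm ^ a)) := by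
  set F := fun x => (r x * Real.log (r x) - r x + 1) * ctsDensity a C mp mm x
  have hpos : EqOn F (fun x => C * (x ^ (-a - 1) * expLinComb lp mp (-1) 1 (mp - lp) x))
      (Ioi 0) := by
    intro x hx
    simp only [F, ctsDensity, if_pos (show (0 : ℝ) < x from hx), hrp x hx,
      ← mul_log_sub_add_one_mul_exp_eq_expLinComb]
    ring
  have hneg : EqOn (fun x => F (-x))
      (fun x => C * (x ^ (-a - 1) * expLinComb lm mm (-1) 1 (mm - lm) x)) (Ioi 0) := by
    intro x hx
    have hx' : -x < 0 := neg_neg_of_pos hx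
    simp only [F, ctsDensity, if_neg hx'.not_gt, if_pos hx', hrm (-x) hx', abs_neg,
      abs_of_pos (show (0 : ℝ) < x from hx), ← mul_log_sub_add_one_mul_exp_eq_expLinComb]
    ring
  obtain ⟨ip, vp⟩ := integral_rpow_neg_sub_one_mul_expLinComb ha₀.ne' ha₁ ha₂ hlp hmp
  obtain ⟨im, vm⟩ := integral_rpow_neg_sub_one_mul_expLinComb ha₀.ne' ha₁ ha₂ hlm hmm
  rw [integral_eq_integral_Ioi_add_integral_Ioi_comp_neg
      (IntegrableOn.congr_fun (ip.const_mul C) hpos.symm measurableSet_Ioi)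
      (IntegrableOn.congr_fun (im.const_mul C) hneg.symm measurableSet_Ioi),
    setIntegral_congr_fun measurableSet_Ioi hpos, setIntegral_congr_fun measurableSet_Ioi hneg,
    integral_const_mul, integral_const_mul, vp, vm]
  ring

/-- (Kim–Lee) Relative entropy between two equivalent-martingale CTS processes. -/
theorem cts_kl_divergence_kim_lee (a C lp lm mp mm T : ℝ)
    (ha₀ : 0 < a) (ha₂ : a < 2) (ha₁ : a ≠ 1)
    (hC : 0 < C) (hlp : 0 < lp) (hlm : 0 < lm) (hmp : 0 < mp) (hmm : 0 < mm)
    (hT : 0 < T) (hdp : lp < 2 * mp) (hdm : lm < 2 * mm)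
    (r : ℝ → ℝ)
    (hrp : ∀ x : ℝ, 0 < x → r x = exp (-((lp - mp) * x)))
    (hrm : ∀ x : ℝ, x < 0 → r x = exp (-((lm - mm) * |x|))) :
    T * ∫ x : ℝ, (r x * Real.log (r x) - r x + 1) * ctsDensity a C mp mm x
      = T * C * Gamma (-a) *
        (((a - 1) * lp ^ a - a * mp * lp ^ (a - 1) + mp ^ a)
          + ((a - 1) * lm ^ a - a * mm * lm ^ (a - 1) + mm ^ a)) :=
  cts_kl_divergence_kim_lee_general a C lp lm mp mm T ha₀ ha₂ ha₁ hlp hlm hmp hmm r hrp hrm
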